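/- Let M, N be monoids such that the Schützenberger product M ⋄ N recognizes, for given regular languages K and L over Σ recognized via monoid homomorphisms g : Σ* → M and h : Σ* → N respectively, the marked product KaL for each a ∈ Σ. Concretely: define f : Σ* → M ⋄ N on letters by f(a) = (g(a), {(1,1)}, h(a)) and f(b) = (g(b), ∅, h(b)) for b ≠ a. Then for P ⊆ M with K = g⁻¹(P) and Q ⊆ N with L = h⁻¹(Q), the language KaL = {vaw : v ∈ K, w ∈ L} equals f⁻¹({(m, X, n) : X ∩ (P × Q) ≠ ∅}). -/

import Mathlib

/-- Left action of `m : M` on a finite subset of `M × N`. -/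
def actL {M N : Type*} [Monoid M] [Monoid N] [DecidableEq M] [DecidableEq N]
    (m : M) (X : Finset (M × N)) : Finset (M × N) :=
  X.image fun p => (m * p.1, p.2)

/-- Right action of `n : N` on a finite subset of `M × N`. -/
def actR {M N : Type*} [Monoid M] [Monoid N] [DecidableEq M] [DecidableEq N]
    (X : Finset (M × N)) (n : N) : Finset (M × N) :=
  X.image fun p => (p.1, p.2 * n)

/-- Schützenberger product multiplication. -/
def schMul {M N : Type*} [Monoid M] [Monoid N] [DecidableEq M] [DecidableEq N]
    (p q : M × Finset (M × N) × N) : M × Finset (M × N) × N :=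
  (p.1 * q.1, actL p.1 q.2.1 ∪ actR p.2.1 q.2.2, p.2.2 * q.2.2)

/-!
By induction on `u`, the middle component of `f u` is exactly the set of pairs `(g v, h w)` over
the factorizations `u = v a w`: multiplying `f t` on the left by `f b` moves each old pair by the
left action of `g b`, and when `b = a` the right action of `h t` on `{(1, 1)}` adds the pair of
the new factorization with `v` empty. So `f u` meets `P × Q` exactly when some factorization has
`g v ∈ P` and `h w ∈ Q`.
-/

theorem List.eq_of_cons_mul_of_singleton {α M : Type*} [Mul M] {φ ψ : List α → M}
    (hnil : φ [] = ψ [])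
    (hφ : ∀ b u, φ (b :: u) = φ [b] * φ u) (hψ : ∀ b u, ψ (b :: u) = ψ [b] * ψ u)
    (hsingle : ∀ b, φ [b] = ψ [b]) : φ = ψ := by
  funext u
  induction u with
  | nil => exact hnil
  | cons b u ih => rw [hφ, hψ, hsingle, ih]

theorem List.exists_cons_eq_append_cons_iff {α : Type*} {a b : α} {t : List α}
    {p : List α → List α → Prop} :
    (∃ v w, b :: t = v ++ a :: w ∧ p v w) ↔
      (b = a ∧ p [] t) ∨ ∃ v w, t = v ++ a :: w ∧ p (b :: v) w := by
  constructor
  · rintro ⟨_ | ⟨c, v⟩, w, huvw, hp⟩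
    · obtain ⟨rfl, rfl⟩ := List.cons.inj huvw
      exact Or.inl ⟨rfl, hp⟩
    · obtain ⟨rfl, rfl⟩ := List.cons.inj huvw
      exact Or.inr ⟨v, w, rfl, hp⟩
  · rintro (⟨rfl, hp⟩ | ⟨v, w, rfl, hp⟩)
    exacts [⟨[], t, rfl, hp⟩, ⟨b :: v, w, rfl, hp⟩]

section SchuetzenbergerProduct

variable {α M N : Type*} [Monoid M] [Monoid N] [DecidableEq M] [DecidableEq N]

theorem mem_schMul_snd {p q : M × Finset (M × N) × N} {x : M × N} :
    x ∈ (schMul p q).2.1 ↔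
      (∃ y ∈ q.2.1, (p.1 * y.1, y.2) = x) ∨ ∃ y ∈ p.2.1, (y.1, y.2 * q.2.2) = x := by
  simp [schMul, actL, actR]

theorem mem_snd_iff_exists_marked_factorization (g : List α → M) (hg1 : g [] = 1)
    (hgmul : ∀ u v : List α, g (u ++ v) = g u * g v) (h : List α → N) (a : α)
    (f : List α → M × Finset (M × N) × N) (hf1 : f [] = (1, ∅, 1))
    (hfmul : ∀ u v : List α, f (u ++ v) = schMul (f u) (f v))
    (hfg : ∀ u, (f u).1 = g u) (hfh : ∀ u, (f u).2.2 = h u)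
    (hfa : f [a] = (g [a], {(1, 1)}, h [a]))
    (hfb : ∀ b : α, b ≠ a → f [b] = (g [b], ∅, h [b])) (u : List α) (x : M × N) :
    x ∈ (f u).2.1 ↔ ∃ v w, u = v ++ a :: w ∧ (g v, h w) = x := by
  induction u generalizing x with
  | nil => simp [hf1]
  | cons b t ih =>
    have hletter : ∀ y, y ∈ (f [b]).2.1 ↔ b = a ∧ y = (1, 1) := by
      intro y
      by_cases hb : b = a
      · simp [hb, hfa]
      · simp [hb, hfb b hb]
    rw [List.exists_cons_eq_append_cons_iff, ← List.singleton_append, hfmul, mem_schMul_snd,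
      or_comm]
    simp [hletter, ih, hfg, hfh, hg1, ← hgmul]

end SchuetzenbergerProduct

/-- The Schützenberger product recognizes marked products: if `K = g⁻¹(P)` and
`L = h⁻¹(Q)` are recognized by homomorphisms `g : Σ* → M` and `h : Σ* → N`, and
`f : Σ* → M ⋄ N` is the homomorphism with `f(a) = (g(a), {(1,1)}, h(a))` and
`f(b) = (g(b), ∅, h(b))` for `b ≠ a`, then
`KaL = f⁻¹({(m, X, n) : X ∩ (P × Q) ≠ ∅})`. -/
theorem schuetzenberger_recognizes_marked_product
    {α M N : Type*} [Monoid M] [Monoid N] [DecidableEq M] [DecidableEq N]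
    (g : List α → M) (hg1 : g [] = 1) (hgmul : ∀ u v : List α, g (u ++ v) = g u * g v)
    (h : List α → N) (hh1 : h [] = 1) (hhmul : ∀ u v : List α, h (u ++ v) = h u * h v)
    (P : Set M) (Q : Set N) (a : α)
    (f : List α → M × Finset (M × N) × N)
    (hf1 : f [] = (1, ∅, 1))
    (hfmul : ∀ u v : List α, f (u ++ v) = schMul (f u) (f v))
    (hfa : f [a] = (g [a], ({((1 : M), (1 : N))} : Finset (M × N)), h [a]))
    (hfb : ∀ b : α, b ≠ a → f [b] = (g [b], (∅ : Finset (M × N)), h [b])) :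
    {u : List α | ∃ v ∈ g ⁻¹' P, ∃ w ∈ h ⁻¹' Q, u = v ++ a :: w} =
      f ⁻¹' {t : M × Finset (M × N) × N | ∃ x ∈ t.2.1, x.1 ∈ P ∧ x.2 ∈ Q} := by
  have hf_letter : ∀ b, (f [b]).1 = g [b] ∧ (f [b]).2.2 = h [b] := by
    intro b
    by_cases hb : b = a
    · simp [hb, hfa]
    · simp [hfb b hb]
  have hfg : ∀ u, (f u).1 = g u := congrFun <|
    List.eq_of_cons_mul_of_singleton (φ := fun u => (f u).1) (by simp [hf1, hg1])
      (fun b u => congrArg Prod.fst (hfmul [b] u)) (fun b u => hgmul [b] u)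
      (fun b => (hf_letter b).1)
  have hfh : ∀ u, (f u).2.2 = h u := congrFun <|
    List.eq_of_cons_mul_of_singleton (φ := fun u => (f u).2.2) (by simp [hf1, hh1])
      (fun b u => congrArg (·.2.2) (hfmul [b] u)) (fun b u => hhmul [b] u)
      (fun b => (hf_letter b).2)
  ext u
  simp only [Set.mem_ofPred_eq, Set.mem_preimage,
    mem_snd_iff_exists_marked_factorization g hg1 hgmul h a f hf1 hfmul hfg hfh hfa hfb]
  constructor
  · rintro ⟨v, hv, w, hw, rfl⟩
    exact ⟨_, ⟨v, w, rfl, rfl⟩, hv, hw⟩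
  · rintro ⟨_, ⟨v, w, rfl, rfl⟩, hv, hw⟩
    exact ⟨v, hv, w, hw, rfl⟩
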